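/- arXiv:2004.09749 — 8 statements merged into one kernel-verified Lean document; each statement's English description precedes it below -/
import Mathlib

section
/- Let X be an n×p real matrix, y(z) = a + b·z a line in R^n parametrized by z ∈ R, and λ > 0. Suppose β(z) and β(z') are Lasso solutions for responses y(z) and y(z') respectively, both with the same active set A (support) and the same sign vector on A, and suppose X_A^T X_A is invertible. Then the restriction of the solutions to A satisfies β_A(z') - β_A(z) = (X_A^T X_A)^{-1} X_A^T b · (z' - z). -/
open Matrix

/-- KKT characterization of a Lasso solution with a given subgradient `s`. -/
def IsLassoKKT {n p : ℕ} (X : Matrix (Fin n) (Fin p) ℝ) (y : Fin n → ℝ) (lam : ℝ)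
    (β s : Fin p → ℝ) : Prop :=
  Xᵀ *ᵥ (X *ᵥ β - y) + lam • s = 0 ∧
    ∀ j, (β j ≠ 0 → s j = Real.sign (β j)) ∧ (β j = 0 → |s j| ≤ 1)

/-- Lemma 1, Eq. (13): along the line `y(z) = a + z b`, if two Lasso
solutions at `z` and `z'` share the same active set `A` and the same signs on `A`, and
`X_A^T X_A` is invertible, then
`β_A(z') - β_A(z) = (X_A^T X_A)⁻¹ X_A^T b ⬝ (z' - z)`. -/
theorem lasso_piecewise_linear_active
    {n p : ℕ} (X : Matrix (Fin n) (Fin p) ℝ) (a b : Fin n → ℝ) (lam : ℝ) (hlam : 0 < lam)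
    (z z' : ℝ) (β β' s s' : Fin p → ℝ) (A : Finset (Fin p))
    (hβ : IsLassoKKT X (a + z • b) lam β s)
    (hβ' : IsLassoKKT X (a + z' • b) lam β' s')
    (hAβ : ∀ j, β j ≠ 0 ↔ j ∈ A)
    (hAβ' : ∀ j, β' j ≠ 0 ↔ j ∈ A)
    (hsign : ∀ j ∈ A, Real.sign (β j) = Real.sign (β' j))
    (XA : Matrix (Fin n) {j // j ∈ A} ℝ) (hXA : XA = X.submatrix id (fun j : {j // j ∈ A} => (j : Fin p)))
    (hG : IsUnit (XAᵀ * XA)) :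
    (fun j : {j // j ∈ A} => β' (j : Fin p)) - (fun j : {j // j ∈ A} => β (j : Fin p)) =
      (z' - z) • ((XAᵀ * XA)⁻¹ *ᵥ (XAᵀ *ᵥ b)) := by
  obtain ⟨hk1, hk2⟩ := hβ
  obtain ⟨hk1', hk2'⟩ := hβ'
  set βA : {j // j ∈ A} → ℝ := fun j => β (j : Fin p) with hβAdef
  set βA' : {j // j ∈ A} → ℝ := fun j => β' (j : Fin p) with hβA'def
  -- X *ᵥ β = XA *ᵥ βA
  have hsupp : ∀ (γ : Fin p → ℝ), (∀ j, γ j ≠ 0 ↔ j ∈ A) →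
      X *ᵥ γ = XA *ᵥ (fun j : {j // j ∈ A} => γ (j : Fin p)) := by
    intro γ hγ
    funext i
    simp only [Matrix.mulVec, dotProduct, hXA, Matrix.submatrix_apply, id]
    rw [show (∑ x : {j // j ∈ A}, X i (x : Fin p) * γ (x : Fin p)) = ∑ x ∈ A, X i x * γ x
      from Finset.sum_coe_sort A (fun j => X i j * γ j)]
    symm
    apply Finset.sum_subset (Finset.subset_univ A)
    intro j _ hj
    have : γ j = 0 := by
      by_contra h
      exact hj ((hγ j).mp h)
    simp [this]
  have hXb : X *ᵥ β = XA *ᵥ βA := hsupp β hAβ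
  have hXb' : X *ᵥ β' = XA *ᵥ βA' := hsupp β' hAβ'
  -- restriction of Xᵀ *ᵥ v
  have hXt : ∀ (v : Fin n → ℝ) (j : {j // j ∈ A}), (Xᵀ *ᵥ v) (j : Fin p) = (XAᵀ *ᵥ v) j := by
    intro v j
    simp [Matrix.mulVec, dotProduct, hXA, Matrix.transpose_apply]
  -- s and s' agree on A
  have hss : ∀ j : {j // j ∈ A}, s (j : Fin p) = s' (j : Fin p) := by
    intro ⟨j, hj⟩
    have h1 : β j ≠ 0 := (hAβ j).mpr hj
    have h2 : β' j ≠ 0 := (hAβ' j).mpr hj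
    rw [(hk2 j).1 h1, (hk2' j).1 h2, hsign j hj]
  -- restricted KKT equations
  have E : XAᵀ *ᵥ (XA *ᵥ βA - (a + z • b)) + lam • (fun j : {j // j ∈ A} => s (j : Fin p)) = 0 := by
    funext j
    have := congrFun hk1 (j : Fin p)
    simp only [Pi.add_apply, Pi.smul_apply, Pi.zero_apply, smul_eq_mul] at this ⊢
    rw [← hXt]
    rw [← hXb]
    exact this
  have E' : XAᵀ *ᵥ (XA *ᵥ βA' - (a + z' • b)) + lam • (fun j : {j // j ∈ A} => s' (j : Fin p)) = 0 := by
    funext j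
    have := congrFun hk1' (j : Fin p)
    simp only [Pi.add_apply, Pi.smul_apply, Pi.zero_apply, smul_eq_mul] at this ⊢
    rw [← hXt]
    rw [← hXb']
    exact this
  -- subtract
  have key : (XAᵀ * XA) *ᵥ (βA' - βA) = (z' - z) • (XAᵀ *ᵥ b) := by
    have h := congrArg₂ (· - ·) E' E
    simp only [sub_zero] at h
    have hs0 : (fun j : {j // j ∈ A} => s' (j : Fin p)) = (fun j : {j // j ∈ A} => s (j : Fin p)) := by
      funext j; exact (hss j).symm
    rw [hs0] at h
    have h2 : XAᵀ *ᵥ (XA *ᵥ βA' - (a + z' • b)) - XAᵀ *ᵥ (XA *ᵥ βA - (a + z • b)) = 0 := by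
      have := h
      abel_nf at this ⊢
      linear_combination (norm := module) this
    rw [← Matrix.mulVec_sub] at h2
    have h3 : (XA *ᵥ βA' - (a + z' • b)) - (XA *ᵥ βA - (a + z • b))
        = XA *ᵥ (βA' - βA) - (z' - z) • b := by
      rw [Matrix.mulVec_sub]
      funext i
      simp only [Pi.sub_apply, Pi.add_apply, Pi.smul_apply, smul_eq_mul]
      ring
    rw [h3, Matrix.mulVec_sub, sub_eq_zero] at h2
    rw [← Matrix.mulVec_mulVec, h2, Matrix.mulVec_smul]
  -- invert
  have hdet : IsUnit (XAᵀ * XA).det := (Matrix.isUnit_iff_isUnit_det _).mp hG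
  have h5 := congrArg (fun v => (XAᵀ * XA)⁻¹ *ᵥ v) key
  simp only [Matrix.mulVec_mulVec, Matrix.nonsing_inv_mul _ hdet, Matrix.one_mulVec,
    Matrix.mulVec_smul] at h5
  rw [h5]
  rw [← Matrix.mulVec_mulVec]
end

section
/- Under the setting of the piecewise-linear Lasso homotopy (responses y(z) = a + bz, common active set A and common signs at z and z', X_A^T X_A invertible), the dual variables on the inactive set A^c satisfy λ s_{A^c}(z') - λ s_{A^c}(z) = γ_{A^c} · (z' - z), where γ_{A^c} = X_{A^c}^T b - X_{A^c}^T X_A (X_A^T X_A)^{-1} X_A^T b. -/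
open Matrix

/-- Lemma 1, Eq. (14): along the line `y(z) = a + z b`, under a common
active set `A` and common signs at `z` and `z'`, the dual variables on the inactive set
satisfy `λ s_{A^c}(z') - λ s_{A^c}(z) = γ_{A^c} (z' - z)` where
`γ_{A^c} = X_{A^c}^T b - X_{A^c}^T X_A (X_A^T X_A)⁻¹ X_A^T b`. -/
theorem lasso_piecewise_linear_inactive
    {n p : ℕ} (X : Matrix (Fin n) (Fin p) ℝ) (a b : Fin n → ℝ) (lam : ℝ) (hlam : 0 < lam)
    (z z' : ℝ) (β β' s s' : Fin p → ℝ) (A : Finset (Fin p))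
    (hβ : IsLassoKKT X (a + z • b) lam β s)
    (hβ' : IsLassoKKT X (a + z' • b) lam β' s')
    (hAβ : ∀ j, β j ≠ 0 ↔ j ∈ A)
    (hAβ' : ∀ j, β' j ≠ 0 ↔ j ∈ A)
    (hsign : ∀ j ∈ A, Real.sign (β j) = Real.sign (β' j))
    (XA : Matrix (Fin n) {j // j ∈ A} ℝ) (hXA : XA = X.submatrix id (fun j : {j // j ∈ A} => (j : Fin p)))
    (hG : IsUnit (XAᵀ * XA))
    (ψ : {j // j ∈ A} → ℝ) (hψ : ψ = (XAᵀ * XA)⁻¹ *ᵥ (XAᵀ *ᵥ b))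
    (γ : Fin p → ℝ)
    (hγ : ∀ j ∉ A, γ j = (fun i => X i j) ⬝ᵥ b - (fun i => X i j) ⬝ᵥ (XA *ᵥ ψ)) :
    ∀ j ∉ A, lam * s' j - lam * s j = γ j * (z' - z) := by
  set βA : {j // j ∈ A} → ℝ := fun j => β (j : Fin p) with hβAdef
  set βA' : {j // j ∈ A} → ℝ := fun j => β' (j : Fin p) with hβA'def
  -- fitted values only involve the active columns
  have key : ∀ (c : Fin p → ℝ), (∀ j, c j ≠ 0 ↔ j ∈ A) →
      X *ᵥ c = XA *ᵥ fun j : {j // j ∈ A} => c (j : Fin p) := by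
    intro c hc
    funext i
    simp only [mulVec, dotProduct, hXA, submatrix_apply, id]
    rw [Finset.sum_coe_sort A (fun j => X i j * c j)]
    symm
    apply Finset.sum_subset A.subset_univ
    intro j _ hj
    have hc0 : c j = 0 := by
      by_contra h
      exact hj ((hc j).1 h)
    simp [hc0]
  have hXβ : X *ᵥ β = XA *ᵥ βA := key β hAβ
  have hXβ' : X *ᵥ β' = XA *ᵥ βA' := key β' hAβ'
  -- rowwise KKT
  have row : ∀ j, (fun i => X i j) ⬝ᵥ (X *ᵥ β - (a + z • b)) + lam * s j = 0 := by
    intro j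
    have := congrFun hβ.1 j
    simpa [mulVec, dotProduct, transpose_apply] using this
  have row' : ∀ j, (fun i => X i j) ⬝ᵥ (X *ᵥ β' - (a + z' • b)) + lam * s' j = 0 := by
    intro j
    have := congrFun hβ'.1 j
    simpa [mulVec, dotProduct, transpose_apply] using this
  -- active set equations, packaged as vectors over the subtype
  have hsub : ∀ j : {j // j ∈ A}, s (j : Fin p) = s' (j : Fin p) := by
    intro j
    have h1 := (hβ.2 (j : Fin p)).1 ((hAβ _).2 j.2)
    have h2 := (hβ'.2 (j : Fin p)).1 ((hAβ' _).2 j.2)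
    rw [h1, h2, hsign _ j.2]
  have active : XAᵀ *ᵥ (XA *ᵥ βA') - XAᵀ *ᵥ (XA *ᵥ βA) = (z' - z) • (XAᵀ *ᵥ b) := by
    funext j
    have h1 := row (j : Fin p)
    have h2 := row' (j : Fin p)
    rw [hXβ] at h1
    rw [hXβ'] at h2
    have hXAj : (fun i => XA i j) = fun i => X i (j : Fin p) := by
      funext i; simp [hXA]
    simp only [mulVec, dotProduct, transpose_apply, Pi.sub_apply, Pi.smul_apply,
      smul_eq_mul, Pi.add_apply] at h1 h2 ⊢
    have hs := hsub j
    have e1 : ∑ i, X i (j : Fin p) * (XA *ᵥ βA) i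
        = ∑ i, X i (j : Fin p) * (a i + z * b i) - lam * s (j : Fin p) := by
      have := h1
      simp only [mulVec, dotProduct, mul_sub, mul_add, Finset.sum_sub_distrib, Finset.sum_add_distrib] at this ⊢
      linarith
    have e2 : ∑ i, X i (j : Fin p) * (XA *ᵥ βA') i
        = ∑ i, X i (j : Fin p) * (a i + z' * b i) - lam * s' (j : Fin p) := by
      have := h2
      simp only [mulVec, dotProduct, mul_sub, mul_add, Finset.sum_sub_distrib, Finset.sum_add_distrib] at this ⊢
      linarith
    calc ∑ i, XA i j * (XA *ᵥ βA') i - ∑ i, XA i j * (XA *ᵥ βA) i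
        = ∑ i, X i (j : Fin p) * (XA *ᵥ βA') i - ∑ i, X i (j : Fin p) * (XA *ᵥ βA) i := by
          simp [hXA]
      _ = (∑ i, X i (j : Fin p) * (a i + z' * b i) - lam * s' (j : Fin p))
          - (∑ i, X i (j : Fin p) * (a i + z * b i) - lam * s (j : Fin p)) := by rw [e1, e2]
      _ = (z' - z) * ∑ i, XA i j * b i := by
          rw [hs]
          simp only [hXA, submatrix_apply, id]
          rw [Finset.mul_sum]
          have hsum : ∑ i, X i (j : Fin p) * (a i + z' * b i)
              - ∑ i, X i (j : Fin p) * (a i + z * b i)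
              = ∑ i, (z' - z) * (X i (j : Fin p) * b i) := by
            rw [← Finset.sum_sub_distrib]
            apply Finset.sum_congr rfl
            intro i _
            ring
          linarith [hsum]
  -- solve for the active coefficients
  have hGdet : IsUnit (XAᵀ * XA).det := (isUnit_iff_isUnit_det _).1 hG
  have hdiff : βA' - βA = (z' - z) • ψ := by
    have h1 : (XAᵀ * XA) *ᵥ (βA' - βA) = (z' - z) • (XAᵀ *ᵥ b) := by
      rw [mulVec_sub]
      simpa using active
    have h2 := congrArg (fun v => (XAᵀ * XA)⁻¹ *ᵥ v) h1
    simp only [mulVec_mulVec, Matrix.nonsing_inv_mul _ hGdet, one_mulVec,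
      mulVec_smul] at h2
    rw [h2, hψ, mulVec_mulVec]
  -- conclude on the inactive set
  intro j hj
  have h1 := row j
  have h2 := row' j
  rw [hXβ] at h1
  rw [hXβ'] at h2
  have e1 : lam * s j = (fun i => X i j) ⬝ᵥ (a + z • b) - (fun i => X i j) ⬝ᵥ (XA *ᵥ βA) := by
    have := h1
    rw [dotProduct_sub] at this
    linarith
  have e2 : lam * s' j = (fun i => X i j) ⬝ᵥ (a + z' • b) - (fun i => X i j) ⬝ᵥ (XA *ᵥ βA') := by
    have := h2
    rw [dotProduct_sub] at this
    linarith
  have hba : XA *ᵥ βA' - XA *ᵥ βA = (z' - z) • (XA *ᵥ ψ) := by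
    rw [← mulVec_sub, hdiff, mulVec_smul]
  rw [e1, e2, hγ j hj]
  have hd1 : (fun i => X i j) ⬝ᵥ (a + z' • b) - (fun i => X i j) ⬝ᵥ (a + z • b)
      = (z' - z) * ((fun i => X i j) ⬝ᵥ b) := by
    rw [dotProduct_add, dotProduct_add, dotProduct_smul, dotProduct_smul]
    simp [smul_eq_mul]; ring
  have hd2 : (fun i => X i j) ⬝ᵥ (XA *ᵥ βA') - (fun i => X i j) ⬝ᵥ (XA *ᵥ βA)
      = (z' - z) * ((fun i => X i j) ⬝ᵥ (XA *ᵥ ψ)) := by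
    rw [← dotProduct_sub, hba, dotProduct_smul, smul_eq_mul]
  linarith [hd1, hd2]
end

section
/- Let s(z') = s(z) + (γ/λ)·(z' - z) coordinatewise on an index set A^c, where λ > 0, |s_j(z)| < 1 for all j ∈ A^c, and γ_j ∈ R. Define t² = min over j ∈ A^c of λ(sign(γ_j) - s_j(z))/γ_j restricted to positive values (∞ if none, and terms with γ_j = 0 contribute ∞). Then for all z' ∈ [z, z + t²), |s_j(z')| < 1 for all j ∈ A^c. -/
/-- Lemma 2, computation of `t²`: if the inactive dual variables evolve
affinely, `s_j(z') = s_j(z) + (γ_j/λ)(z'-z)`, with `|s_j(z)| < 1` for all `j`, and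
`t² = min_j (λ(sign(γ_j) - s_j(z))/γ_j)_{++}` (terms with `γ_j = 0` or nonpositive value
contributing `∞`), then `|s_j(z')| < 1` for all `j` and all `z' ∈ [z, z + t²)`. -/
theorem lasso_step_size_inactive
    {ι : Type*} [Fintype ι]
    (s : ℝ → ι → ℝ) (γ : ι → ℝ) (lam z : ℝ) (hlam : 0 < lam)
    (haffine : ∀ z' j, s z' j = s z j + (γ j / lam) * (z' - z))
    (hlt : ∀ j, |s z j| < 1)
    (T : Set ℝ)
    (hT : T = {t : ℝ | 0 < t ∧ ∃ j, γ j ≠ 0 ∧ t = lam * (Real.sign (γ j) - s z j) / γ j}) :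
    ∀ z' : ℝ, z ≤ z' → (∀ t ∈ T, z' - z < t) → ∀ j, |s z' j| < 1 := by
  subst hT
  intro z' hz hsmall j
  have hd : 0 ≤ z' - z := by linarith
  have hs := abs_lt.mp (hlt j)
  rw [haffine, abs_lt]
  rcases lt_trichotomy (γ j) 0 with hg | hg | hg
  · have hnum : lam * (Real.sign (γ j) - s z j) < 0 := by
      rw [Real.sign_of_neg hg]
      nlinarith [hs.1]
    have hpos : 0 < lam * (Real.sign (γ j) - s z j) / γ j :=
      div_pos_of_neg_of_neg hnum hg
    have hmem := hsmall _ ⟨hpos, j, ne_of_lt hg, rfl⟩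
    rw [Real.sign_of_neg hg] at hmem
    have hkey : (z' - z) * γ j > lam * (-1 - s z j) := by
      have := (lt_div_iff_of_neg hg).mp hmem
      nlinarith
    constructor
    · have : γ j / lam * (z' - z) > -1 - s z j := by
        rw [gt_iff_lt, div_mul_eq_mul_div, lt_div_iff₀ hlam]
        nlinarith
      linarith
    · have : γ j / lam * (z' - z) ≤ 0 :=
        mul_nonpos_of_nonpos_of_nonneg (div_nonpos_of_nonpos_of_nonneg hg.le hlam.le) hd
      linarith
  · simp [hg]
    exact hs
  · have hnum : 0 < lam * (Real.sign (γ j) - s z j) := by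
      rw [Real.sign_of_pos hg]
      nlinarith [hs.2]
    have hpos : 0 < lam * (Real.sign (γ j) - s z j) / γ j := div_pos hnum hg
    have hmem := hsmall _ ⟨hpos, j, ne_of_gt hg, rfl⟩
    rw [Real.sign_of_pos hg] at hmem
    have hkey : (z' - z) * γ j < lam * (1 - s z j) := by
      have := (lt_div_iff₀ hg).mp hmem
      nlinarith
    constructor
    · have : 0 ≤ γ j / lam * (z' - z) :=
        mul_nonneg (div_nonneg hg.le hlam.le) hd
      linarith
    · have : γ j / lam * (z' - z) < 1 - s z j := by
        rw [div_mul_eq_mul_div, div_lt_iff₀ hlam]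
        nlinarith
      linarith
end

section
/- Let X ∈ R^{n×p}, y(z) = a + bz, λ > 0, δ > 0, and consider the elastic net β̂(z) = argmin (1/(2n))‖y(z) - Xβ‖² + λ‖β‖₁ + (δ/2)‖β‖². If β̂(z) and β̂(z') have the same active set A and same signs on A, then β̂_A(z') - β̂_A(z) = (X_A^T X_A + nδ I_{|A|})^{-1} X_A^T b · (z' - z). -/
open Matrix

/-- KKT characterization of an elastic-net solution with a given subgradient `s`:
`(1/n) Xᵀ(Xβ - y) + λ s + δ β = 0` with `s ∈ ∂‖β‖₁`. -/
def IsElasticNetKKT {n p : ℕ} (X : Matrix (Fin n) (Fin p) ℝ) (y : Fin n → ℝ)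
    (lam δ : ℝ) (β s : Fin p → ℝ) : Prop :=
  (n : ℝ)⁻¹ • (Xᵀ *ᵥ (X *ᵥ β - y)) + lam • s + δ • β = 0 ∧
    ∀ j, (β j ≠ 0 → s j = Real.sign (β j)) ∧ (β j = 0 → |s j| ≤ 1)

/-- elastic-net homotopy, Lemma 3: along `y(z) = a + z b`, if two
elastic-net solutions at `z` and `z'` have the same active set `A` and signs, then
`β̂_A(z') - β̂_A(z) = (X_A^T X_A + nδ I)⁻¹ X_A^T b (z' - z)`. -/
theorem elastic_net_piecewise_linear
    {n p : ℕ} (X : Matrix (Fin n) (Fin p) ℝ) (a b : Fin n → ℝ)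
    (lam δ : ℝ) (hlam : 0 < lam) (hδ : 0 < δ)
    (z z' : ℝ) (β β' s s' : Fin p → ℝ) (A : Finset (Fin p))
    (hβ : IsElasticNetKKT X (a + z • b) lam δ β s)
    (hβ' : IsElasticNetKKT X (a + z' • b) lam δ β' s')
    (hAβ : ∀ j, β j ≠ 0 ↔ j ∈ A)
    (hAβ' : ∀ j, β' j ≠ 0 ↔ j ∈ A)
    (hsign : ∀ j ∈ A, Real.sign (β j) = Real.sign (β' j))
    (XA : Matrix (Fin n) {j // j ∈ A} ℝ)
    (hXA : XA = X.submatrix id (fun j : {j // j ∈ A} => (j : Fin p))) :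
    (fun j : {j // j ∈ A} => β' (j : Fin p)) - (fun j : {j // j ∈ A} => β (j : Fin p)) =
      (z' - z) • ((XAᵀ * XA + ((n : ℝ) * δ) • (1 : Matrix {j // j ∈ A} {j // j ∈ A} ℝ))⁻¹
        *ᵥ (XAᵀ *ᵥ b)) := by
  obtain ⟨hk1, hs1⟩ := hβ
  obtain ⟨hk2, hs2⟩ := hβ'
  rcases Nat.eq_zero_or_pos n with hn | hn
  · -- n = 0 : the KKT condition forces the active set to be empty
    subst hn
    have hA : ∀ j : Fin p, j ∉ A := by
      intro j hj
      have hb0 : β j ≠ 0 := (hAβ j).mpr hj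
      have h1 := congrFun hk1 j
      have hT : (Xᵀ *ᵥ (X *ᵥ β - (a + z • b))) j = 0 := by
        simp [Matrix.mulVec, dotProduct]
      simp only [Pi.add_apply, Pi.smul_apply, Pi.zero_apply, smul_eq_mul, hT,
        Nat.cast_zero, _root_.inv_zero, mul_zero, zero_add] at h1
      have hsj : s j = Real.sign (β j) := (hs1 j).1 hb0
      rcases hb0.lt_or_gt with hneg | hpos
      · rw [hsj, Real.sign_of_neg hneg] at h1; nlinarith
      · rw [hsj, Real.sign_of_pos hpos] at h1; nlinarith
    funext j
    exact absurd j.2 (hA j)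
  · have hn0 : (n : ℝ) ≠ 0 := by positivity
    set d : Fin p → ℝ := β' - β with hd
    set dA : {j // j ∈ A} → ℝ :=
      (fun j : {j // j ∈ A} => β' (j : Fin p)) - (fun j : {j // j ∈ A} => β (j : Fin p)) with hdA
    set M : Matrix {j // j ∈ A} {j // j ∈ A} ℝ :=
      XAᵀ * XA + ((n : ℝ) * δ) • (1 : Matrix {j // j ∈ A} {j // j ∈ A} ℝ) with hM
    -- d is supported on A
    have hd0 : ∀ j, j ∉ A → d j = 0 := by
      intro j hj
      have h1 : β j = 0 := by_contra fun h => hj ((hAβ j).mp h)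
      have h2 : β' j = 0 := by_contra fun h => hj ((hAβ' j).mp h)
      simp [hd, h1, h2]
    -- X *ᵥ d = XA *ᵥ dA
    have hXd : X *ᵥ d = XA *ᵥ dA := by
      funext i
      simp only [Matrix.mulVec, dotProduct, hXA, Matrix.submatrix_apply, id_eq]
      rw [show (∑ j : {j // j ∈ A}, X i (j : Fin p) * dA j)
            = ∑ k ∈ A, X i k * d k from Finset.sum_coe_sort A (fun k => X i k * d k)]
      exact (Finset.sum_subset A.subset_univ (fun k _ hk => by simp [hd0 k hk])).symm
    -- restriction of Xᵀ *ᵥ v to A agrees with XAᵀ *ᵥ v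
    have hres : ∀ (v : Fin n → ℝ) (j : {j // j ∈ A}),
        (XAᵀ *ᵥ v) j = (Xᵀ *ᵥ v) (j : Fin p) := by
      intro v j
      simp [hXA, Matrix.mulVec, dotProduct, Matrix.transpose_apply]
    -- key linear equation
    have key : M *ᵥ dA = (z' - z) • (XAᵀ *ᵥ b) := by
      funext j
      have h1 := congrFun hk1 (j : Fin p)
      have h2 := congrFun hk2 (j : Fin p)
      have hsj : s (j : Fin p) = s' (j : Fin p) := by
        rw [(hs1 _).1 ((hAβ _).mpr j.2), (hs2 _).1 ((hAβ' _).mpr j.2), hsign _ j.2]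
      simp only [Pi.add_apply, Pi.smul_apply, Pi.zero_apply, smul_eq_mul] at h1 h2
      have e1 : (Xᵀ *ᵥ (X *ᵥ β - (a + z • b))) (j : Fin p)
          = (Xᵀ *ᵥ (X *ᵥ β)) (j : Fin p) - (Xᵀ *ᵥ a) (j : Fin p) - z * (Xᵀ *ᵥ b) (j : Fin p) := by
        simp [Matrix.mulVec, dotProduct, Finset.sum_sub_distrib, Finset.mul_sum,
          mul_add, mul_sub, Finset.sum_add_distrib, mul_comm, mul_left_comm]
        ring
      have e2 : (Xᵀ *ᵥ (X *ᵥ β' - (a + z' • b))) (j : Fin p)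
          = (Xᵀ *ᵥ (X *ᵥ β')) (j : Fin p) - (Xᵀ *ᵥ a) (j : Fin p) - z' * (Xᵀ *ᵥ b) (j : Fin p) := by
        simp [Matrix.mulVec, dotProduct, Finset.sum_sub_distrib, Finset.mul_sum,
          mul_add, mul_sub, Finset.sum_add_distrib, mul_comm, mul_left_comm]
        ring
      have e3 : (M *ᵥ dA) j
          = (Xᵀ *ᵥ (X *ᵥ β')) (j : Fin p) - (Xᵀ *ᵥ (X *ᵥ β)) (j : Fin p)
            + (n : ℝ) * δ * dA j := by
        have : (M *ᵥ dA) j = ((XAᵀ * XA) *ᵥ dA) j + (n : ℝ) * δ * dA j := by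
          simp [hM, Matrix.add_mulVec, Matrix.smul_mulVec, Matrix.one_mulVec]
        rw [this, ← Matrix.mulVec_mulVec, ← hXd, hres]
        have : Xᵀ *ᵥ (X *ᵥ d) = Xᵀ *ᵥ (X *ᵥ β') - Xᵀ *ᵥ (X *ᵥ β) := by
          rw [hd, ← Matrix.mulVec_sub, ← Matrix.mulVec_sub]
        rw [this]
        simp
      rw [e1] at h1
      rw [e2] at h2
      have h1' := congrArg (fun t => (n : ℝ) * t) h1
      have h2' := congrArg (fun t => (n : ℝ) * t) h2
      simp only [mul_add, mul_zero, ← mul_assoc, mul_inv_cancel₀ hn0, one_mul] at h1' h2'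
      have hdAj : dA j = β' (j : Fin p) - β (j : Fin p) := rfl
      rw [e3, hdAj]
      simp only [Pi.smul_apply, smul_eq_mul]
      rw [hres b j]
      rw [hsj] at h1'
      nlinarith [h1', h2']
    -- M is positive definite, hence invertible
    have hpd : M.PosDef := by
      rw [hM]
      refine Matrix.PosDef.posSemidef_add ?_ ?_
      · have := Matrix.posSemidef_conjTranspose_mul_self XA
        simpa [Matrix.conjTranspose_eq_transpose_of_trivial] using this
      · exact Matrix.PosDef.one.smul (by positivity)
    have hinv : M⁻¹ * M = 1 := Matrix.nonsing_inv_mul M (Matrix.isUnit_iff_isUnit_det M |>.mp hpd.isUnit)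
    calc dA = (M⁻¹ * M) *ᵥ dA := by rw [hinv, Matrix.one_mulVec]
      _ = M⁻¹ *ᵥ (M *ᵥ dA) := (Matrix.mulVec_mulVec _ _ _).symm
      _ = M⁻¹ *ᵥ ((z' - z) • (XAᵀ *ᵥ b)) := by rw [key]
      _ = (z' - z) • (M⁻¹ *ᵥ (XAᵀ *ᵥ b)) := by rw [Matrix.mulVec_smul]
end

section
/- Suppose for each λ in a finite set Λ, the map z ↦ β̂_λ(z) ∈ R^p is piecewise affine (affine on each interval of a finite partition of R) and y_val(z) = a_val + b_val·z is affine. Then the validation error E_λ(z) = (1/2)‖y_val(z) - X_val β̂_λ(z)‖² is a piecewise quadratic function of z, and the set Z₂ = {z : E_{λ*}(z) ≤ E_λ(z) for all λ ∈ Λ} is a finite union of intervals. -/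
open Matrix Finset Set

private lemma quad_mono_split (c2 c1 c0 : ℝ) :
    ∃ v : ℝ,
      (MonotoneOn (fun z => c2 * z^2 + c1 * z + c0) (Set.Iic v) ∨
       AntitoneOn (fun z => c2 * z^2 + c1 * z + c0) (Set.Iic v)) ∧
      (MonotoneOn (fun z => c2 * z^2 + c1 * z + c0) (Set.Ici v) ∨
       AntitoneOn (fun z => c2 * z^2 + c1 * z + c0) (Set.Ici v)) := by
  rcases lt_trichotomy c2 0 with hc | hc | hc
  · refine ⟨-c1/(2*c2), Or.inl ?_, Or.inr ?_⟩
    · intro x hx y hy hxy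
      simp only [Set.mem_Iic] at hx hy
      have h2 : c2 ≠ 0 := ne_of_lt hc
      have hv : 2 * c2 * (-c1/(2*c2)) = -c1 := by field_simp
      have hy' : 2 * c2 * y ≥ 2 * c2 * (-c1/(2*c2)) := by nlinarith
      simp only
      nlinarith [mul_nonneg (sub_nonneg.2 hxy) (sub_nonneg.2 hxy)]
    · intro x hx y hy hxy
      simp only [Set.mem_Ici] at hx hy
      have h2 : c2 ≠ 0 := ne_of_lt hc
      have hv : 2 * c2 * (-c1/(2*c2)) = -c1 := by field_simp
      have hx' : 2 * c2 * x ≤ 2 * c2 * (-c1/(2*c2)) := by nlinarith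
      simp only
      nlinarith [mul_nonneg (sub_nonneg.2 hxy) (sub_nonneg.2 hxy)]
  · subst hc
    rcases le_or_gt 0 c1 with h1 | h1
    · exact ⟨0, Or.inl (fun x _ y _ hxy => by simp only; nlinarith),
        Or.inl (fun x _ y _ hxy => by simp only; nlinarith)⟩
    · exact ⟨0, Or.inr (fun x _ y _ hxy => by simp only; nlinarith),
        Or.inr (fun x _ y _ hxy => by simp only; nlinarith)⟩
  · refine ⟨-c1/(2*c2), Or.inr ?_, Or.inl ?_⟩
    · intro x hx y hy hxy
      simp only [Set.mem_Iic] at hx hy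
      have h2 : c2 ≠ 0 := ne_of_gt hc
      have hv : 2 * c2 * (-c1/(2*c2)) = -c1 := by field_simp
      have hy' : 2 * c2 * y ≤ 2 * c2 * (-c1/(2*c2)) := by nlinarith
      simp only
      nlinarith [mul_nonneg (sub_nonneg.2 hxy) (sub_nonneg.2 hxy)]
    · intro x hx y hy hxy
      simp only [Set.mem_Ici] at hx hy
      have h2 : c2 ≠ 0 := ne_of_gt hc
      have hv : 2 * c2 * (-c1/(2*c2)) = -c1 := by field_simp
      have hx' : 2 * c2 * x ≥ 2 * c2 * (-c1/(2*c2)) := by nlinarith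
      simp only
      nlinarith [mul_nonneg (sub_nonneg.2 hxy) (sub_nonneg.2 hxy)]

private lemma ordConnected_sep (f : ℝ → ℝ) (I : Set ℝ) (hI : I.OrdConnected)
    (h : MonotoneOn f I ∨ AntitoneOn f I) :
    Set.OrdConnected {z ∈ I | 0 ≤ f z} := by
  constructor
  rintro x ⟨hxI, hxf⟩ y ⟨hyI, hyf⟩ z hz
  have hzI : z ∈ I := hI.out hxI hyI hz
  refine ⟨hzI, ?_⟩
  rcases h with h | h
  · exact le_trans hxf (h hxI hzI hz.1)
  · exact le_trans hyf (h hzI hyI hz.2)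

/-- if each solution path `z ↦ β̂_λ(z)` is piecewise affine (affine on
each interval of a finite cover of `ℝ` by intervals) and `y_val(z)` is affine, then each
validation error `E_λ(z) = (1/2)‖y_val(z) - X_val β̂_λ(z)‖²` is piecewise quadratic, and
the set `Z₂ = {z : E_{λ*}(z) ≤ E_λ(z) ∀ λ ∈ Λ}` is a finite union of intervals. -/
theorem validation_error_piecewise_quadratic
    {m p : ℕ} (Xval : Matrix (Fin m) (Fin p) ℝ) (aval bval : Fin m → ℝ)
    (Λ : Finset ℝ) (lamstar : ℝ) (hstar : lamstar ∈ Λ)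
    (βhat : ℝ → ℝ → (Fin p → ℝ))
    (hpiecewise : ∀ lam ∈ Λ, ∃ P : Finset (Set ℝ),
      (⋃ I ∈ P, I) = Set.univ ∧
      ∀ I ∈ P, I.OrdConnected ∧ ∃ u v : Fin p → ℝ, ∀ z ∈ I, βhat lam z = u + z • v)
    (E : ℝ → ℝ → ℝ)
    (hE : E = fun lam z =>
      (1/2) * ∑ i, ((aval i + z * bval i) - (Xval *ᵥ βhat lam z) i)^2) :
    (∀ lam ∈ Λ, ∃ P : Finset (Set ℝ),
      (⋃ I ∈ P, I) = Set.univ ∧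
      ∀ I ∈ P, I.OrdConnected ∧ ∃ c2 c1 c0 : ℝ, ∀ z ∈ I,
        E lam z = c2 * z^2 + c1 * z + c0) ∧
    (∃ Q : Finset (Set ℝ), (∀ I ∈ Q, I.OrdConnected) ∧
      {z : ℝ | ∀ lam ∈ Λ, E lamstar z ≤ E lam z} = ⋃ I ∈ Q, I) := by
  classical
  have h1 : ∀ lam ∈ Λ, ∃ P : Finset (Set ℝ),
      (⋃ I ∈ P, I) = Set.univ ∧
      ∀ I ∈ P, I.OrdConnected ∧ ∃ c2 c1 c0 : ℝ, ∀ z ∈ I,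
        E lam z = c2 * z^2 + c1 * z + c0 := by
    intro lam hlam
    obtain ⟨P, hcov, hP⟩ := hpiecewise lam hlam
    refine ⟨P, hcov, fun I hI => ?_⟩
    obtain ⟨hord, u, v, huv⟩ := hP I hI
    refine ⟨hord, (1/2) * ∑ i, (bval i - (Xval *ᵥ v) i)^2,
      ∑ i, (aval i - (Xval *ᵥ u) i) * (bval i - (Xval *ᵥ v) i),
      (1/2) * ∑ i, (aval i - (Xval *ᵥ u) i)^2, fun z hz => ?_⟩
    subst hE
    simp only
    rw [huv z hz]
    have hmv : ∀ i, (Xval *ᵥ (u + z • v)) i = (Xval *ᵥ u) i + z * (Xval *ᵥ v) i := by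
      intro i
      simp [Matrix.mulVec_add, Matrix.mulVec_smul]
    have expand : ∑ i, ((aval i + z * bval i) - (Xval *ᵥ (u + z • v)) i)^2
        = ∑ i, ((bval i - (Xval *ᵥ v) i)^2 * z^2
            + 2 * ((aval i - (Xval *ᵥ u) i) * (bval i - (Xval *ᵥ v) i)) * z
            + (aval i - (Xval *ᵥ u) i)^2) := by
      apply Finset.sum_congr rfl
      intro i _
      rw [hmv i]; ring
    rw [expand, Finset.sum_add_distrib, Finset.sum_add_distrib, ← Finset.sum_mul,
      ← Finset.sum_mul, ← Finset.mul_sum]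
    ring
  refine ⟨h1, ?_⟩
  -- totalize the piecewise-quadratic data
  have h1' : ∀ lam : ℝ, ∃ P : Finset (Set ℝ),
      lam ∈ Λ → ((⋃ I ∈ P, I) = Set.univ ∧
      ∀ I ∈ P, I.OrdConnected ∧ ∃ c2 c1 c0 : ℝ, ∀ z ∈ I,
        E lam z = c2 * z^2 + c1 * z + c0) := by
    intro lam
    by_cases h : lam ∈ Λ
    · obtain ⟨P, hP⟩ := h1 lam h
      exact ⟨P, fun _ => hP⟩
    · exact ⟨∅, fun h' => absurd h' h⟩
  choose P hP using h1'
  have hcoef : ∀ (lam : ℝ) (I : Set ℝ), ∃ c : ℝ × ℝ × ℝ,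
      lam ∈ Λ → I ∈ P lam → ∀ z ∈ I,
        E lam z = c.1 * z^2 + c.2.1 * z + c.2.2 := by
    intro lam I
    by_cases h : lam ∈ Λ
    · by_cases hI : I ∈ P lam
      · obtain ⟨_, c2, c1, c0, hcc⟩ := (hP lam h).2 I hI
        exact ⟨(c2, c1, c0), fun _ _ => hcc⟩
      · exact ⟨(0,0,0), fun _ h' => absurd h' hI⟩
    · exact ⟨(0,0,0), fun h' => absurd h' h⟩
  choose c hc using hcoef
  choose vf hv1 hv2 using quad_mono_split
  -- quadratic difference and its split point on a pair of cells
  set d2 : ℝ → Set ℝ → Set ℝ → ℝ :=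
    fun lam I J => (c lam I).1 - (c lamstar J).1 with hd2
  set d1 : ℝ → Set ℝ → Set ℝ → ℝ :=
    fun lam I J => (c lam I).2.1 - (c lamstar J).2.1 with hd1
  set d0 : ℝ → Set ℝ → Set ℝ → ℝ :=
    fun lam I J => (c lam I).2.2 - (c lamstar J).2.2 with hd0
  set q : ℝ → Set ℝ → Set ℝ → ℝ → ℝ :=
    fun lam I J z => d2 lam I J * z^2 + d1 lam I J * z + d0 lam I J with hqdef
  set vv : ℝ → Set ℝ → Set ℝ → ℝ :=
    fun lam I J => vf (d2 lam I J) (d1 lam I J) (d0 lam I J) with hvv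
  set G : ℝ → Set ℝ → Bool → Set ℝ → Set ℝ := fun lam I b J =>
    {z ∈ (if b then Set.Iic (vv lam I J) else Set.Ici (vv lam I J)) ∩ I ∩ J |
      0 ≤ q lam I J z} with hG
  set T : (∀ lam ∈ Λ, Set ℝ × Bool) → Set ℝ := fun h =>
    ⋂ lam, ⋂ (hm : lam ∈ Λ), G lam (h lam hm).1 (h lam hm).2 (h lamstar hstar).1 with hT
  refine ⟨(Λ.pi (fun lam => (P lam) ×ˢ ({true, false} : Finset Bool))).image T, ?_, ?_⟩
  · -- each T h is ord-connected
    intro S hS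
    rw [Finset.mem_image] at hS
    obtain ⟨h, hh, rfl⟩ := hS
    rw [Finset.mem_pi] at hh
    apply Set.ordConnected_iInter
    intro lam
    apply Set.ordConnected_iInter
    intro hm
    have hIP : (h lam hm).1 ∈ P lam := (Finset.mem_product.1 (hh lam hm)).1
    have hJP : (h lamstar hstar).1 ∈ P lamstar := (Finset.mem_product.1 (hh lamstar hstar)).1
    have hIord : ((h lam hm).1 : Set ℝ).OrdConnected := ((hP lam hm).2 _ hIP).1
    have hJord : ((h lamstar hstar).1 : Set ℝ).OrdConnected := ((hP lamstar hstar).2 _ hJP).1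
    set I := (h lam hm).1
    set J := (h lamstar hstar).1
    set b := (h lam hm).2
    have hside : (if b then Set.Iic (vv lam I J) else Set.Ici (vv lam I J)).OrdConnected := by
      cases b <;> simp [Set.ordConnected_Iic, Set.ordConnected_Ici]
    apply ordConnected_sep
    · exact (hside.inter hIord).inter hJord
    · cases b with
      | true =>
        rcases hv1 (d2 lam I J) (d1 lam I J) (d0 lam I J) with hmono | hanti
        · exact Or.inl (hmono.mono (fun z hz => by simpa using hz.1.1))
        · exact Or.inr (hanti.mono (fun z hz => by simpa using hz.1.1))
      | false =>
        rcases hv2 (d2 lam I J) (d1 lam I J) (d0 lam I J) with hmono | hanti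
        · exact Or.inl (hmono.mono (fun z hz => by simpa using hz.1.1))
        · exact Or.inr (hanti.mono (fun z hz => by simpa using hz.1.1))
  · -- the set equality
    ext z
    simp only [Set.mem_setOf_eq, Set.mem_iUnion, Finset.mem_image, exists_prop,
      exists_exists_and_eq_and]
    constructor
    · intro hz
      have hcell : ∀ lam ∈ Λ, ∃ I ∈ P lam, z ∈ I := by
        intro lam hm
        have := (hP lam hm).1
        have hzu : z ∈ ⋃ I ∈ P lam, I := this ▸ Set.mem_univ z
        simpa using hzu
      choose I hIP hIz using hcell
      refine ⟨fun lam hm => (I lam hm,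
        decide (z ≤ vv lam (I lam hm) (I lamstar hstar))), ?_, ?_⟩
      · rw [Finset.mem_pi]
        intro lam hm
        rw [Finset.mem_product]
        refine ⟨hIP lam hm, ?_⟩
        rcases Bool.dichotomy (decide (z ≤ vv lam (I lam hm) (I lamstar hstar))) with h | h <;>
          simp [h]
      · rw [hT]
        simp only [Set.mem_iInter]
        intro lam hm
        rw [hG]
        refine ⟨⟨⟨?_, hIz lam hm⟩, hIz lamstar hstar⟩, ?_⟩
        · by_cases hzv : z ≤ vv lam (I lam hm) (I lamstar hstar)
          · simp [hzv]
          · simp only [decide_eq_true_eq, hzv, decide_eq_false_iff_not, if_neg, if_false]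
            simp [hzv, le_of_not_ge hzv]
        · have e1 := hc lam (I lam hm) hm (hIP lam hm) z (hIz lam hm)
          have e2 := hc lamstar (I lamstar hstar) hstar (hIP lamstar hstar) z (hIz lamstar hstar)
          have := hz lam hm
          simp only [hqdef, hd2, hd1, hd0]
          nlinarith [this, e1, e2]
    · rintro ⟨h, hh, hzT⟩
      rw [Finset.mem_pi] at hh
      rw [hT] at hzT
      simp only [Set.mem_iInter] at hzT
      intro lam hm
      have hG' := hzT lam hm
      rw [hG] at hG'
      obtain ⟨⟨⟨_, hzI⟩, hzJ⟩, hq0⟩ := hG'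
      have hIP : (h lam hm).1 ∈ P lam := (Finset.mem_product.1 (hh lam hm)).1
      have hJP : (h lamstar hstar).1 ∈ P lamstar := (Finset.mem_product.1 (hh lamstar hstar)).1
      have e1 := hc lam (h lam hm).1 hm hIP z hzI
      have e2 := hc lamstar (h lamstar hstar).1 hstar hJP z hzJ
      simp only [hqdef, hd2, hd1, hd0] at hq0
      nlinarith [hq0, e1, e2]
end

section
/- Fix z ∈ R and suppose the Lasso solution path β̂(·) along y(z') = a + bz' satisfies: β̂_A(z') = β̂_A(z) + ψ_A (z'-z) and λ s_{A^c}(z') = λ s_{A^c}(z) + γ_{A^c}(z'-z) as long as the active set and signs are unchanged, with all β̂_j(z) ≠ 0 for j ∈ A and |s_j(z)| < 1 for j ∈ A^c. Let t_z = min(t¹, t²) with t¹ = min_{j∈A}(-β̂_j(z)/ψ_j)_{++} and t² = min_{j∈A^c}(λ(sign(γ_j)-s_j(z))/γ_j)_{++}. Then the vector β' defined by β'_A = β̂_A(z) + ψ_A(z'-z), β'_{A^c} = 0 satisfies the Lasso KKT conditions for y(z') with subgradient s'_A = s_A(z), s'_{A^c}(z') = s_{A^c}(z) + (γ_{A^c}/λ)(z'-z),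 for every z' ∈ [z, z + t_z). -/
open Matrix

/-- (validity of the homotopy continuation on `[z, z + t_z)`): the
affinely continued primal/dual pair
`β'_A = β̂_A(z) + ψ_A (z'-z)`, `β'_{A^c} = 0`, `s'_A = s_A(z)`,
`s'_{A^c} = s_{A^c}(z) + (γ_{A^c}/λ)(z'-z)` satisfies the Lasso KKT conditions for
`y(z') = a + z' b`, for every `z' ∈ [z, z + t_z)` where `t_z = min(t¹, t²)` with
`t¹ = min_{j∈A}(-β̂_j(z)/ψ_j)_{++}` and
`t² = min_{j∈A^c}(λ(sign(γ_j)-s_j(z))/γ_j)_{++}` (staying below every positive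
candidate step encodes `z' - z < t_z`, with empty candidate sets meaning `∞`). -/
theorem lasso_homotopy_continuation
    {n p : ℕ} (X : Matrix (Fin n) (Fin p) ℝ) (a b : Fin n → ℝ) (lam : ℝ) (hlam : 0 < lam)
    (z : ℝ) (β s : Fin p → ℝ)
    (hKKT : IsLassoKKT X (a + z • b) lam β s)
    (A : Finset (Fin p)) (hA : ∀ j, β j ≠ 0 ↔ j ∈ A)
    (hstrict : ∀ j ∉ A, |s j| < 1)
    (XA : Matrix (Fin n) {j // j ∈ A} ℝ)
    (hXA : XA = X.submatrix id (fun j : {j // j ∈ A} => (j : Fin p)))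
    (hG : IsUnit (XAᵀ * XA))
    (ψ : {j // j ∈ A} → ℝ) (hψ : ψ = (XAᵀ * XA)⁻¹ *ᵥ (XAᵀ *ᵥ b))
    (γ : Fin p → ℝ)
    (hγ : ∀ j ∉ A, γ j = (fun i => X i j) ⬝ᵥ b - (fun i => X i j) ⬝ᵥ (XA *ᵥ ψ))
    (S1 S2 : Set ℝ)
    (hS1 : S1 = {t : ℝ | 0 < t ∧ ∃ h : {j // j ∈ A}, t = -(β (h : Fin p)) / ψ h})
    (hS2 : S2 = {t : ℝ | 0 < t ∧ ∃ j ∉ A, γ j ≠ 0 ∧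
      t = lam * (Real.sign (γ j) - s j) / γ j}) :
    ∀ z' : ℝ, z ≤ z' → (∀ t ∈ S1, z' - z < t) → (∀ t ∈ S2, z' - z < t) →
      IsLassoKKT X (a + z' • b) lam
        (fun j => if h : j ∈ A then β j + ψ ⟨j, h⟩ * (z' - z) else 0)
        (fun j => if j ∈ A then s j else s j + (γ j / lam) * (z' - z)) := by
  obtain ⟨hstat, hsub⟩ := hKKT
  intro z' hz hS1lt hS2lt
  set δ : ℝ := z' - z with hδ
  have hδ0 : 0 ≤ δ := sub_nonneg.mpr hz
  have hβ0 : ∀ k, k ∉ A → β k = 0 := by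
    intro k hk
    by_contra h
    exact hk ((hA k).mp h)
  set w : Fin n → ℝ := XA *ᵥ ψ with hw
  have hfact1 : XAᵀ *ᵥ w = XAᵀ *ᵥ b := by
    have hdet : IsUnit (XAᵀ * XA).det := (Matrix.isUnit_iff_isUnit_det _).mp hG
    rw [hw, hψ]
    simp only [Matrix.mulVec_mulVec]
    simp only [← Matrix.mul_assoc]
    rw [Matrix.mul_nonsing_inv _ hdet, Matrix.one_mul]
  have hXAapp : ∀ (i : Fin n) (j : {j // j ∈ A}), XA i j = X i (j : Fin p) := by
    intro i j; rw [hXA]; rfl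
  have hcolA : ∀ (j : Fin p), j ∈ A →
      ∑ i, X i j * w i = ∑ i, X i j * b i := by
    intro j hj
    have h := congrFun hfact1 ⟨j, hj⟩
    simpa [Matrix.mulVec, dotProduct, Matrix.transpose_apply, hXAapp] using h
  have hcolAc : ∀ j ∉ A, ∑ i, X i j * w i = ∑ i, X i j * b i - γ j := by
    intro j hj
    have h := hγ j hj
    simp only [dotProduct] at h
    linarith
  have hXβ' : ∀ i, (X *ᵥ (fun j => if h : j ∈ A then β j + ψ ⟨j, h⟩ * δ else 0)) i
      = (X *ᵥ β) i + δ * w i := by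
    intro i
    have hw_i : w i = ∑ j : {j // j ∈ A}, X i (j : Fin p) * ψ j := by
      simp [hw, Matrix.mulVec, dotProduct, hXAapp]
    simp only [Matrix.mulVec, dotProduct, hw_i, Finset.mul_sum]
    have hsplit : ∀ k : Fin p,
        X i k * (if h : k ∈ A then β k + ψ ⟨k, h⟩ * δ else 0)
        = X i k * β k + (if h : k ∈ A then X i k * (ψ ⟨k, h⟩ * δ) else 0) := by
      intro k
      by_cases h : k ∈ A
      · simp [h]; ring
      · simp [h, hβ0 k h]
    rw [Finset.sum_congr rfl (fun k _ => hsplit k), Finset.sum_add_distrib]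
    congr 1
    rw [← Finset.sum_subset (Finset.subset_univ A) (by intro x _ hx; simp [hx])]
    rw [← Finset.sum_attach A fun k => if h : k ∈ A then X i k * (ψ ⟨k, h⟩ * δ) else 0]
    rw [Finset.univ_eq_attach]
    refine Finset.sum_congr rfl ?_
    intro x _
    rw [dif_pos x.2]
    ring
  constructor
  · -- stationarity
    have hvec : X *ᵥ (fun j => if h : j ∈ A then β j + ψ ⟨j, h⟩ * δ else 0) - (a + z' • b)
        = (X *ᵥ β - (a + z • b)) + δ • (w - b) := by
      funext i
      rw [Pi.sub_apply, hXβ' i]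
      simp only [Pi.add_apply, Pi.sub_apply, Pi.smul_apply, smul_eq_mul, hXβ' i, hδ]
      ring
    rw [hvec, Matrix.mulVec_add, Matrix.mulVec_smul]
    have hstat' : Xᵀ *ᵥ (X *ᵥ β - (a + z • b)) = -(lam • s) :=
      eq_neg_of_add_eq_zero_left hstat
    rw [hstat']
    funext j
    simp only [Pi.add_apply, Pi.neg_apply, Pi.smul_apply, smul_eq_mul, Pi.zero_apply,
      Matrix.mulVec, dotProduct, Matrix.transpose_apply, Pi.sub_apply, mul_sub,
      Finset.sum_sub_distrib]
    by_cases hj : j ∈ A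
    · rw [if_pos hj, hcolA j hj]
      ring
    · rw [if_neg hj, hcolAc j hj]
      field_simp
      ring
  · -- subgradient conditions
    intro j
    by_cases hj : j ∈ A
    · have hβj : β j ≠ 0 := (hA j).mpr hj
      have hsj : s j = Real.sign (β j) := (hsub j).1 hβj
      have hpos : 0 < β j → 0 < β j + ψ ⟨j, hj⟩ * δ := by
        intro hp
        rcases le_or_gt 0 (ψ ⟨j, hj⟩) with hψ0 | hψ0
        · nlinarith
        · have ht : (0:ℝ) < -(β j) / ψ ⟨j, hj⟩ :=
            div_pos_of_neg_of_neg (by linarith) hψ0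
          have hlt := hS1lt _ (by rw [hS1]; exact ⟨ht, ⟨⟨j, hj⟩, rfl⟩⟩)
          rw [lt_div_iff_of_neg hψ0] at hlt
          nlinarith
      have hneg : β j < 0 → β j + ψ ⟨j, hj⟩ * δ < 0 := by
        intro hp
        rcases le_or_gt (ψ ⟨j, hj⟩) 0 with hψ0 | hψ0
        · nlinarith
        · have ht : (0:ℝ) < -(β j) / ψ ⟨j, hj⟩ :=
            div_pos (by linarith) hψ0
          have hlt := hS1lt _ (by rw [hS1]; exact ⟨ht, ⟨⟨j, hj⟩, rfl⟩⟩)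
          rw [lt_div_iff₀ hψ0] at hlt
          nlinarith
      have hkey : β j + ψ ⟨j, hj⟩ * δ ≠ 0 ∧
          Real.sign (β j + ψ ⟨j, hj⟩ * δ) = Real.sign (β j) := by
        rcases lt_trichotomy (β j) 0 with h | h | h
        · exact ⟨ne_of_lt (hneg h), by rw [Real.sign_of_neg (hneg h), Real.sign_of_neg h]⟩
        · exact absurd h hβj
        · exact ⟨ne_of_gt (hpos h), by rw [Real.sign_of_pos (hpos h), Real.sign_of_pos h]⟩
      constructor
      · intro _
        simp only [dif_pos hj, if_pos hj]
        rw [hsj, ← hkey.2]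
      · intro h
        simp only [dif_pos hj] at h
        exact absurd h hkey.1
    · simp only [dif_neg hj, if_neg hj]
      refine ⟨fun h => absurd rfl h, fun _ => ?_⟩
      have hs := abs_lt.mp (hstrict j hj)
      rcases lt_trichotomy (γ j) 0 with hg | hg | hg
      · have ht : 0 < lam * (Real.sign (γ j) - s j) / γ j := by
          rw [Real.sign_of_neg hg]
          exact div_pos_of_neg_of_neg (by nlinarith [hs.1]) hg
        have hlt := hS2lt _ (by rw [hS2]; exact ⟨ht, j, hj, ne_of_lt hg, rfl⟩)
        rw [Real.sign_of_neg hg, lt_div_iff_of_neg hg] at hlt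
        -- hlt : lam * (-1 - s j) < δ * γ j
        rw [abs_le]
        constructor
        · have h1 : -1 - s j < δ * γ j / lam := by
            rw [lt_div_iff₀ hlam]; nlinarith
          have h2 : γ j / lam * δ = δ * γ j / lam := by ring
          linarith [h1, h2.ge, h2.le]
        · have h1 : γ j / lam * δ ≤ 0 :=
            mul_nonpos_of_nonpos_of_nonneg
              (div_nonpos_of_nonpos_of_nonneg hg.le hlam.le) hδ0
          linarith [hs.2]
      · rw [hg]
        simp only [zero_div, zero_mul, add_zero]
        rw [abs_le]
        exact ⟨le_of_lt hs.1, le_of_lt hs.2⟩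
      · have ht : 0 < lam * (Real.sign (γ j) - s j) / γ j := by
          rw [Real.sign_of_pos hg]
          exact div_pos (by nlinarith [hs.2]) hg
        have hlt := hS2lt _ (by rw [hS2]; exact ⟨ht, j, hj, ne_of_gt hg, rfl⟩)
        rw [Real.sign_of_pos hg, lt_div_iff₀ hg] at hlt
        -- hlt : δ * γ j < lam * (1 - s j)
        rw [abs_le]
        constructor
        · have h1 : 0 ≤ γ j / lam * δ :=
            mul_nonneg (div_nonneg hg.le hlam.le) hδ0
          linarith [hs.1]
        · have h1 : δ * γ j / lam < 1 - s j := by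
            rw [div_lt_iff₀ hlam]; nlinarith
          have h2 : γ j / lam * δ = δ * γ j / lam := by ring
          linarith [h1, h2.ge, h2.le]
end

section
/- For a fixed active set A with X_A^T X_A invertible and fixed sign vector s_A ∈ {-1,1}^{|A|}, the set of response vectors y ∈ R^n for which the Lasso solution has exactly active set A and signs s_A is a (possibly empty) convex polyhedron: it equals {y : diag(s_A)(X_A^TX_A)^{-1}(X_A^Ty - λs_A) > 0 and ‖X_{A^c}^T(y - X_A(X_A^TX_A)^{-1}(X_A^Ty - λs_A))‖_∞ < λ} (an intersection of finitely many open affine half-spaces). -/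
open Matrix

private lemma sign_mul_pos {a b : ℝ} (hs : a = 1 ∨ a = -1) (hb : b ≠ 0)
    (hsign : Real.sign b = a) : 0 < a * b := by
  rcases lt_trichotomy b 0 with h | h | h
  · rw [Real.sign_of_neg h] at hsign
    rw [← hsign]; nlinarith
  · exact absurd h hb
  · rw [Real.sign_of_pos h] at hsign
    rw [← hsign]; nlinarith

private lemma pos_mul_sign {a b : ℝ} (hs : a = 1 ∨ a = -1) (h : 0 < a * b) :
    b ≠ 0 ∧ Real.sign b = a := by
  rcases hs with hs | hs <;> subst hs
  · rw [one_mul] at h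
    exact ⟨ne_of_gt h, Real.sign_of_pos h⟩
  · have hb : b < 0 := by nlinarith
    exact ⟨ne_of_lt hb, Real.sign_of_neg hb⟩

private lemma mulVec_restrict {n p : ℕ} (X : Matrix (Fin n) (Fin p) ℝ)
    (A : Finset (Fin p)) (β : Fin p → ℝ) (hβ : ∀ j ∉ A, β j = 0) :
    X *ᵥ β = (X.submatrix id (fun j : {j // j ∈ A} => (j : Fin p))) *ᵥ (fun j => β j) := by
  funext i
  simp only [mulVec, dotProduct, submatrix_apply, id_eq]
  rw [Finset.univ_eq_attach, Finset.sum_attach A (fun j => X i j * β j)]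
  symm
  apply Finset.sum_subset (Finset.subset_univ A)
  intro j _ hj
  rw [hβ j hj, mul_zero]

/-- for a fixed active set `A` (with invertible Gram matrix) and
sign vector `s_A ∈ {±1}^A`, the set of responses `y` realizing exactly this
(active set, sign) pattern — with strict dual feasibility — is the convex polyhedron
`{y : diag(s_A)(X_A^TX_A)⁻¹(X_A^Ty - λ s_A) > 0, ‖X_{A^c}^T(y - X_A β_A(y))‖_∞ < λ}`,
where `β_A(y) = (X_A^TX_A)⁻¹(X_A^Ty - λ s_A)`. -/
theorem lasso_selection_event_is_polyhedron
    {n p : ℕ} (X : Matrix (Fin n) (Fin p) ℝ) (lam : ℝ) (hlam : 0 < lam)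
    (A : Finset (Fin p)) (sA : {j // j ∈ A} → ℝ) (hsA : ∀ j, sA j = 1 ∨ sA j = -1)
    (XA : Matrix (Fin n) {j // j ∈ A} ℝ)
    (hXA : XA = X.submatrix id (fun j : {j // j ∈ A} => (j : Fin p)))
    (hG : IsUnit (XAᵀ * XA))
    (βA : (Fin n → ℝ) → ({j // j ∈ A} → ℝ))
    (hβA : βA = fun y => (XAᵀ * XA)⁻¹ *ᵥ ((XAᵀ *ᵥ y) - lam • sA)) :
    {y : Fin n → ℝ | ∃ β s : Fin p → ℝ, IsLassoKKT X y lam β s ∧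
        (∀ j, β j ≠ 0 ↔ j ∈ A) ∧
        (∀ j, ∀ h : j ∈ A, Real.sign (β j) = sA ⟨j, h⟩) ∧
        (∀ j ∉ A, |s j| < 1)} =
      {y : Fin n → ℝ | (∀ j : {j // j ∈ A}, 0 < sA j * βA y j) ∧
        (∀ j ∉ A, |(fun i => X i j) ⬝ᵥ (y - XA *ᵥ βA y)| < lam)} ∧
    Convex ℝ {y : Fin n → ℝ | (∀ j : {j // j ∈ A}, 0 < sA j * βA y j) ∧
        (∀ j ∉ A, |(fun i => X i j) ⬝ᵥ (y - XA *ᵥ βA y)| < lam)} := by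
  have hdet : IsUnit (XAᵀ * XA).det := (Matrix.isUnit_iff_isUnit_det _).mp hG
  -- Gram identity : (XAᵀ * XA) *ᵥ βA y = XAᵀ *ᵥ y - lam • sA
  have hGram : ∀ y : Fin n → ℝ, (XAᵀ * XA) *ᵥ βA y = XAᵀ *ᵥ y - lam • sA := by
    intro y
    rw [hβA]
    simp only [mulVec_mulVec, Matrix.mul_nonsing_inv _ hdet, one_mulVec]
  -- stationarity on the active block
  have hstat : ∀ y : Fin n → ℝ, XAᵀ *ᵥ (XA *ᵥ βA y - y) + lam • sA = 0 := by
    intro y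
    rw [mulVec_sub, mulVec_mulVec, hGram y]
    abel
  constructor
  · ext y
    simp only [Set.mem_setOf_eq]
    constructor
    · rintro ⟨β, s, ⟨hkkt, hsub⟩, hsupp, hsign, hdual⟩
      -- the restriction of β to A is βA y
      have hβ0 : ∀ j ∉ A, β j = 0 := fun j hj => by
        by_contra h; exact hj ((hsupp j).mp h)
      have hXβ : X *ᵥ β = XA *ᵥ (fun j : {j // j ∈ A} => β j) := by
        rw [hXA]; exact mulVec_restrict X A β hβ0
      -- s restricted to A equals sA
      have hsA' : ∀ j : {j // j ∈ A}, s j = sA j := by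
        intro j
        rw [(hsub j).1 ((hsupp j).mpr j.2), hsign j j.2]
      -- coordinates of KKT
      have hkktc : ∀ j : Fin p, (fun i => X i j) ⬝ᵥ (X *ᵥ β - y) + lam * s j = 0 := by
        intro j
        have h := congrFun hkkt j
        simp only [Pi.add_apply, Pi.smul_apply, Pi.zero_apply, smul_eq_mul] at h
        exact h
      -- active-block equation gives β|A = βA y
      have hact : (XAᵀ * XA) *ᵥ (fun j : {j // j ∈ A} => β j) = XAᵀ *ᵥ y - lam • sA := by
        funext j
        have h1 := hkktc j
        rw [hXβ] at h1
        have h2 : (XAᵀ *ᵥ (XA *ᵥ (fun j : {j // j ∈ A} => β j) - y)) j + lam * sA j = 0 := by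
          rw [← hsA' j]
          have : (XAᵀ *ᵥ (XA *ᵥ (fun j : {j // j ∈ A} => β j) - y)) j
              = (fun i => X i (j : Fin p)) ⬝ᵥ (XA *ᵥ (fun j : {j // j ∈ A} => β j) - y) := by
            rw [hXA]; rfl
          rw [this]; exact h1
        have h3 := congrFun (mulVec_sub XAᵀ (XA *ᵥ (fun j : {j // j ∈ A} => β j)) y) j
        have h4 := congrFun (mulVec_mulVec (fun j : {j // j ∈ A} => β j) XAᵀ XA).symm j
        simp only [Pi.sub_apply] at h3
        simp only [mulVec_sub, Pi.sub_apply, mulVec_mulVec] at h2 ⊢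
        simp only [Pi.sub_apply, Pi.smul_apply, smul_eq_mul]
        linarith
      have hβA' : (fun j : {j // j ∈ A} => β j) = βA y := by
        have := congrArg (fun v => (XAᵀ * XA)⁻¹ *ᵥ v) hact
        simpa only [mulVec_mulVec, Matrix.nonsing_inv_mul _ hdet, one_mulVec, ← hβA,
          (by rw [hβA] : βA y = (XAᵀ * XA)⁻¹ *ᵥ ((XAᵀ *ᵥ y) - lam • sA))] using this
      constructor
      · intro j
        have hbne : β (j : Fin p) ≠ 0 := (hsupp j).mpr j.2
        have : Real.sign (β (j : Fin p)) = sA j := by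
          have := hsign (j : Fin p) j.2; simpa using this
        have hpos := sign_mul_pos (hsA j) hbne this
        rwa [show βA y j = β (j : Fin p) from (congrFun hβA' j).symm]
      · intro j hj
        have h1 := hkktc j
        rw [hXβ, hβA'] at h1
        have h2 : (fun i => X i j) ⬝ᵥ (y - XA *ᵥ βA y) = lam * s j := by
          have : (fun i => X i j) ⬝ᵥ (XA *ᵥ βA y - y) = -((fun i => X i j) ⬝ᵥ (y - XA *ᵥ βA y)) := by
            rw [← dotProduct_neg]; congr 1; abel
          rw [this] at h1; linarith
        rw [h2, abs_mul, abs_of_pos hlam]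
        calc lam * |s j| < lam * 1 := by
              exact (mul_lt_mul_iff_right₀ hlam).mpr (hdual j hj)
          _ = lam := mul_one lam
    · rintro ⟨hpos, hdual⟩
      classical
      refine ⟨fun j => if h : j ∈ A then βA y ⟨j, h⟩ else 0,
        fun j => if h : j ∈ A then sA ⟨j, h⟩ else ((fun i => X i j) ⬝ᵥ (y - XA *ᵥ βA y)) / lam, ?_, ?_, ?_, ?_⟩
      · set β : Fin p → ℝ := fun j => if h : j ∈ A then βA y ⟨j, h⟩ else 0 with hβdef
        set s : Fin p → ℝ := fun j => if h : j ∈ A then sA ⟨j, h⟩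
          else ((fun i => X i j) ⬝ᵥ (y - XA *ᵥ βA y)) / lam with hsdef
        have hXβ : X *ᵥ β = XA *ᵥ βA y := by
          rw [hXA, mulVec_restrict X A β (fun j hj => by simp [hβdef, hj])]
          congr 1
          funext j
          simp [hβdef, j.2]
        constructor
        · funext j
          simp only [Pi.add_apply, Pi.smul_apply, Pi.zero_apply, smul_eq_mul]
          by_cases hj : j ∈ A
          · have := congrFun (hstat y) ⟨j, hj⟩
            simp only [Pi.add_apply, Pi.smul_apply, Pi.zero_apply, smul_eq_mul] at this
            have heq : (Xᵀ *ᵥ (X *ᵥ β - y)) j = (XAᵀ *ᵥ (XA *ᵥ βA y - y)) ⟨j, hj⟩ := by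
              rw [hXβ, hXA]; rfl
            rw [heq, hsdef]
            simp only [hj, dif_pos]
            exact this
          · have : (Xᵀ *ᵥ (X *ᵥ β - y)) j = (fun i => X i j) ⬝ᵥ (XA *ᵥ βA y - y) := by
              rw [hXβ]; rfl
            rw [this, hsdef]
            simp only [hj, dif_neg, not_false_iff]
            have hneg : (fun i => X i j) ⬝ᵥ (XA *ᵥ βA y - y) = -((fun i => X i j) ⬝ᵥ (y - XA *ᵥ βA y)) := by
              rw [← dotProduct_neg]; congr 1; abel
            rw [hneg]
            field_simp
            ring
        · intro j
          by_cases hj : j ∈ A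
          · have hsig := pos_mul_sign (hsA ⟨j, hj⟩) (hpos ⟨j, hj⟩)
            constructor
            · intro _
              simp only [hβdef, hsdef, hj, dif_pos]
              exact hsig.2.symm
            · intro hzero
              simp only [hβdef, hj, dif_pos] at hzero
              exact absurd hzero hsig.1
          · constructor
            · intro hne
              simp only [hβdef, hj, dif_neg, not_false_iff] at hne
              exact absurd rfl hne
            · intro _
              simp only [hsdef, hj, dif_neg, not_false_iff]
              rw [abs_div, abs_of_pos hlam, div_le_one hlam]
              exact le_of_lt (hdual j hj)
      · intro j
        by_cases hj : j ∈ A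
        · have hsig := pos_mul_sign (hsA ⟨j, hj⟩) (hpos ⟨j, hj⟩)
          simp only [dif_pos hj]
          exact ⟨fun _ => hj, fun _ => hsig.1⟩
        · simp only [dif_neg hj]
          exact ⟨fun h => absurd rfl h, fun h => absurd h hj⟩
      · intro j h
        have hsig := pos_mul_sign (hsA ⟨j, h⟩) (hpos ⟨j, h⟩)
        simp only [dif_pos h]
        exact hsig.2
      · intro j hj
        simp only [dif_neg hj]
        rw [abs_div, abs_of_pos hlam, div_lt_one hlam]
        exact hdual j hj
  · -- convexity
    intro y1 hy1 y2 hy2 a b ha hb hab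
    have haff : βA (a • y1 + b • y2) = a • βA y1 + b • βA y2 := by
      rw [hβA]
      simp only
      rw [mulVec_add, mulVec_smul, mulVec_smul]
      have : a • (XAᵀ *ᵥ y1) + b • (XAᵀ *ᵥ y2) - lam • sA
          = a • ((XAᵀ *ᵥ y1) - lam • sA) + b • ((XAᵀ *ᵥ y2) - lam • sA) := by
        funext k
        simp only [Pi.add_apply, Pi.sub_apply, Pi.smul_apply, smul_eq_mul]
        linear_combination (lam * sA k) * hab
      rw [this, mulVec_add, mulVec_smul, mulVec_smul]
    constructor
    · intro j
      rw [haff]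
      simp only [Pi.add_apply, Pi.smul_apply, smul_eq_mul]
      have key : 0 < a * (sA j * βA y1 j) + b * (sA j * βA y2 j) := by
        rcases ha.lt_or_eq with ha0 | ha0
        · have h1 := mul_pos ha0 (hy1.1 j)
          have h2 := mul_nonneg hb (hy2.1 j).le
          linarith
        · have hb0 : 0 < b := by linarith
          have h2 := mul_pos hb0 (hy2.1 j)
          have h1 := mul_nonneg ha (hy1.1 j).le
          linarith
      have hre : sA j * (a * βA y1 j + b * βA y2 j)
          = a * (sA j * βA y1 j) + b * (sA j * βA y2 j) := by ring
      rw [hre]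
      exact key
    · intro j hj
      rw [haff]
      have hexp : a • y1 + b • y2 - XA *ᵥ (a • βA y1 + b • βA y2)
          = a • (y1 - XA *ᵥ βA y1) + b • (y2 - XA *ᵥ βA y2) := by
        rw [mulVec_add, mulVec_smul, mulVec_smul, smul_sub, smul_sub]
        abel
      rw [hexp, dotProduct_add, dotProduct_smul, dotProduct_smul]
      have h1 := hy1.2 j hj
      have h2 := hy2.2 j hj
      calc |a • ((fun i => X i j) ⬝ᵥ (y1 - XA *ᵥ βA y1)) + b • ((fun i => X i j) ⬝ᵥ (y2 - XA *ᵥ βA y2))|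
          ≤ |a • ((fun i => X i j) ⬝ᵥ (y1 - XA *ᵥ βA y1))| + |b • ((fun i => X i j) ⬝ᵥ (y2 - XA *ᵥ βA y2))| := abs_add_le _ _
        _ = a * |(fun i => X i j) ⬝ᵥ (y1 - XA *ᵥ βA y1)| + b * |(fun i => X i j) ⬝ᵥ (y2 - XA *ᵥ βA y2)| := by
            simp [smul_eq_mul, abs_mul, abs_of_nonneg ha, abs_of_nonneg hb]
        _ < a * lam + b * lam := by
            rcases eq_or_lt_of_le ha with ha0 | ha0
            · rcases eq_or_lt_of_le hb with hb0 | hb0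
              · exfalso; rw [← ha0, ← hb0] at hab; simp at hab
              · simp only [← ha0, zero_mul, zero_add]
                exact (mul_lt_mul_iff_right₀ hb0).mpr h2
            · rcases eq_or_lt_of_le hb with hb0 | hb0
              · simp only [← hb0, zero_mul, add_zero]
                exact (mul_lt_mul_iff_right₀ ha0).mpr h1
              · have := (mul_lt_mul_iff_right₀ ha0).mpr h1
                have := (mul_lt_mul_iff_right₀ hb0).mpr h2
                linarith
        _ = lam := by rw [← add_mul, hab, one_mul]
end

section
/- The set {y ∈ R^n : A(y) = A_obs} of responses whose Lasso active set equals a fixed set A_obs is the union over all sign vectors s ∈ {-1,1}^{|A_obs|} of the polyhedra P(A_obs, s), where P(A, s) is the polyhedron of responses realizing active set A with signs s; and these polyhedra are pairwise disjoint. -/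
open Matrix

/-- Multiplying a vector supported on `Aobs` by `X` equals multiplying the restricted
vector by the submatrix. -/
lemma lasso_mulVec_restrict {n p : ℕ} (X : Matrix (Fin n) (Fin p) ℝ) (Aobs : Finset (Fin p))
    (β : Fin p → ℝ) (hβ : ∀ j ∉ Aobs, β j = 0) :
    X *ᵥ β = (X.submatrix id (fun j : {j // j ∈ Aobs} => (j : Fin p))) *ᵥ
      (fun j : {j // j ∈ Aobs} => β (j : Fin p)) := by
  funext i
  show ∑ j, X i j * β j = ∑ j : {j // j ∈ Aobs}, X i (j : Fin p) * β (j : Fin p)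
  rw [Finset.sum_coe_sort Aobs (fun j => X i j * β j)]
  exact (Finset.sum_subset (Finset.subset_univ Aobs)
    (fun x _ hx => by rw [hβ x hx, mul_zero])).symm

/-- the selection event `{y : A(y) = A_obs}` (responses whose Lasso
active set equals `A_obs`, with strict dual feasibility) is the union over all sign
vectors `s ∈ {±1}^{A_obs}` of the polyhedra `P(A_obs, s)`, and these polyhedra are
pairwise disjoint. -/
theorem lasso_selection_event_union_of_polyhedra
    {n p : ℕ} (X : Matrix (Fin n) (Fin p) ℝ) (lam : ℝ) (hlam : 0 < lam)
    (Aobs : Finset (Fin p))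
    (XA : Matrix (Fin n) {j // j ∈ Aobs} ℝ)
    (hXA : XA = X.submatrix id (fun j : {j // j ∈ Aobs} => (j : Fin p)))
    (hG : IsUnit (XAᵀ * XA))
    (Pset : ({j // j ∈ Aobs} → ℝ) → Set (Fin n → ℝ))
    (hPset : Pset = fun sA =>
      {y : Fin n → ℝ |
        (∀ j : {j // j ∈ Aobs},
          0 < sA j * ((XAᵀ * XA)⁻¹ *ᵥ ((XAᵀ *ᵥ y) - lam • sA)) j) ∧
        (∀ j ∉ Aobs, |(fun i => X i j) ⬝ᵥ
          (y - XA *ᵥ ((XAᵀ * XA)⁻¹ *ᵥ ((XAᵀ *ᵥ y) - lam • sA)))| < lam)}) :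
    ({y : Fin n → ℝ | ∃ β s : Fin p → ℝ, IsLassoKKT X y lam β s ∧
        (∀ j, β j ≠ 0 ↔ j ∈ Aobs) ∧ (∀ j ∉ Aobs, |s j| < 1)} =
      ⋃ sA ∈ {sA : {j // j ∈ Aobs} → ℝ | ∀ j, sA j = 1 ∨ sA j = -1}, Pset sA) ∧
    ∀ sA sA' : {j // j ∈ Aobs} → ℝ,
      (∀ j, sA j = 1 ∨ sA j = -1) → (∀ j, sA' j = 1 ∨ sA' j = -1) → sA ≠ sA' →
        Disjoint (Pset sA) (Pset sA') := by
  subst hXA hPset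
  set XA : Matrix (Fin n) {j // j ∈ Aobs} ℝ :=
    X.submatrix id (fun j : {j // j ∈ Aobs} => (j : Fin p)) with hXA
  have hGd : IsUnit (XAᵀ * XA).det := (Matrix.isUnit_iff_isUnit_det _).mp hG
  have hinvG : ∀ v : {j // j ∈ Aobs} → ℝ, (XAᵀ * XA)⁻¹ *ᵥ ((XAᵀ * XA) *ᵥ v) = v := by
    intro v
    rw [Matrix.mulVec_mulVec, Matrix.nonsing_inv_mul _ hGd, Matrix.one_mulVec]
  have hGinv : ∀ v : {j // j ∈ Aobs} → ℝ, (XAᵀ * XA) *ᵥ ((XAᵀ * XA)⁻¹ *ᵥ v) = v := by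
    intro v
    rw [Matrix.mulVec_mulVec, Matrix.mul_nonsing_inv _ hGd, Matrix.one_mulVec]
  have hdot : ∀ (j : Fin p) (v : Fin n → ℝ), (fun i => X i j) ⬝ᵥ v = (Xᵀ *ᵥ v) j :=
    fun _ _ => rfl
  have hTA : ∀ (v : Fin n → ℝ) (j : {j // j ∈ Aobs}),
      (XAᵀ *ᵥ v) j = (Xᵀ *ᵥ v) (j : Fin p) := fun _ _ => rfl
  constructor
  · ext y
    simp only [Set.mem_setOf_eq, Set.mem_iUnion, exists_prop]
    constructor
    · rintro ⟨β, s, ⟨hk1, hk2⟩, hact, hdual⟩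
      set sA : {j // j ∈ Aobs} → ℝ := fun j => s (j : Fin p) with hsAdef
      set βA : {j // j ∈ Aobs} → ℝ := fun j => β (j : Fin p) with hβAdef
      have hβ0 : ∀ j ∉ Aobs, β j = 0 := fun j hj =>
        not_not.mp (fun h => hj ((hact j).mp h))
      have hXb : X *ᵥ β = XA *ᵥ βA := lasso_mulVec_restrict X Aobs β hβ0
      have hrow : ∀ j, (Xᵀ *ᵥ (X *ᵥ β)) j - (Xᵀ *ᵥ y) j + lam * s j = 0 := by
        intro j
        have := congrFun hk1 j
        simp only [Matrix.mulVec_sub, Pi.add_apply, Pi.sub_apply, Pi.smul_apply,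
          smul_eq_mul, Pi.zero_apply] at this
        linarith
      have hGA : (XAᵀ * XA) *ᵥ βA = XAᵀ *ᵥ y - lam • sA := by
        funext j
        have h1 : ((XAᵀ * XA) *ᵥ βA) j = (Xᵀ *ᵥ (X *ᵥ β)) (j : Fin p) := by
          rw [← Matrix.mulVec_mulVec, ← hXb]; exact hTA _ j
        have h2 := hrow (j : Fin p)
        simp only [Pi.sub_apply, Pi.smul_apply, smul_eq_mul]
        rw [h1, hTA y j]
        linarith
      have hβA : βA = (XAᵀ * XA)⁻¹ *ᵥ (XAᵀ *ᵥ y - lam • sA) := by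
        rw [← hGA]; exact (hinvG βA).symm
      refine ⟨sA, ?_, ?_, ?_⟩
      · intro j
        have hne : β (j : Fin p) ≠ 0 := (hact _).mpr j.2
        have hsg := (hk2 (j : Fin p)).1 hne
        rcases lt_or_gt_of_ne hne with h | h
        · right; rw [hsAdef]; simp only; rw [hsg, Real.sign_of_neg h]
        · left; rw [hsAdef]; simp only; rw [hsg, Real.sign_of_pos h]
      · intro j
        rw [← hβA]
        have hne : β (j : Fin p) ≠ 0 := (hact _).mpr j.2
        have hsg := (hk2 (j : Fin p)).1 hne
        show 0 < s (j : Fin p) * β (j : Fin p)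
        rcases lt_or_gt_of_ne hne with h | h
        · rw [hsg, Real.sign_of_neg h]; nlinarith
        · rw [hsg, Real.sign_of_pos h]; nlinarith
      · intro j hj
        rw [← hβA, ← hXb, hdot]
        have h2 := hrow j
        have h3 : (Xᵀ *ᵥ (y - X *ᵥ β)) j = (Xᵀ *ᵥ y) j - (Xᵀ *ᵥ (X *ᵥ β)) j := by
          rw [Matrix.mulVec_sub, Pi.sub_apply]
        rw [h3, show (Xᵀ *ᵥ y) j - (Xᵀ *ᵥ (X *ᵥ β)) j = lam * s j by linarith,
          abs_mul, abs_of_pos hlam]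
        exact mul_lt_of_lt_one_right hlam (hdual j hj)
    · rintro ⟨sA, hsA, hy1, hy2⟩
      set βA : {j // j ∈ Aobs} → ℝ := (XAᵀ * XA)⁻¹ *ᵥ (XAᵀ *ᵥ y - lam • sA) with hβAdef
      set β : Fin p → ℝ := fun j => if h : j ∈ Aobs then βA ⟨j, h⟩ else 0 with hβdef
      set s : Fin p → ℝ := fun j =>
        if h : j ∈ Aobs then sA ⟨j, h⟩ else lam⁻¹ * ((Xᵀ *ᵥ (y - XA *ᵥ βA)) j) with hsdef
      have hβ0 : ∀ j ∉ Aobs, β j = 0 := fun j hj => dif_neg hj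
      have hrestr : (fun j : {j // j ∈ Aobs} => β (j : Fin p)) = βA := by
        funext j
        rw [hβdef]
        exact dif_pos j.2
      have hXb : X *ᵥ β = XA *ᵥ βA := by
        rw [← hrestr]; exact lasso_mulVec_restrict X Aobs β hβ0
      have hGβ : (XAᵀ * XA) *ᵥ βA = XAᵀ *ᵥ y - lam • sA := hGinv _
      have hAeq : XAᵀ *ᵥ (XA *ᵥ βA - y) = -(lam • sA) := by
        rw [Matrix.mulVec_sub, Matrix.mulVec_mulVec, hGβ]
        abel
      have hβAne : ∀ j : {j // j ∈ Aobs}, βA j ≠ 0 := by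
        intro j hz
        have := hy1 j
        rw [hz, mul_zero] at this
        exact lt_irrefl 0 this
      have hk1 : Xᵀ *ᵥ (X *ᵥ β - y) + lam • s = 0 := by
        funext j
        simp only [Pi.add_apply, Pi.smul_apply, smul_eq_mul, Pi.zero_apply]
        by_cases h : j ∈ Aobs
        · have hj1 : (Xᵀ *ᵥ (X *ᵥ β - y)) j = (XAᵀ *ᵥ (XA *ᵥ βA - y)) ⟨j, h⟩ := by
            rw [hXb]; exact (hTA _ ⟨j, h⟩).symm
          have hj2 := congrFun hAeq ⟨j, h⟩
          simp only [Pi.neg_apply, Pi.smul_apply, smul_eq_mul] at hj2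
          rw [hj1, hj2, hsdef]
          simp only [dif_pos h]
          ring
        · have hj1 : (Xᵀ *ᵥ (X *ᵥ β - y)) j = -((Xᵀ *ᵥ (y - XA *ᵥ βA)) j) := by
            rw [hXb, show XA *ᵥ βA - y = -(y - XA *ᵥ βA) from (neg_sub _ _).symm,
              Matrix.mulVec_neg, Pi.neg_apply]
          rw [hj1, hsdef]
          simp only [dif_neg h]
          field_simp
          ring
      have hssign : ∀ (j : Fin p) (h : j ∈ Aobs), sA ⟨j, h⟩ = Real.sign (βA ⟨j, h⟩) := by
        intro j h
        have hp := hy1 ⟨j, h⟩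
        rcases hsA ⟨j, h⟩ with hs1 | hs1
        · rw [hs1, one_mul] at hp
          rw [hs1, Real.sign_of_pos hp]
        · rw [hs1] at hp ⊢
          have : βA ⟨j, h⟩ < 0 := by nlinarith
          rw [Real.sign_of_neg this]
      have hsmall : ∀ j ∉ Aobs, |s j| < 1 := by
        intro j hj
        rw [hsdef]
        simp only [dif_neg hj]
        have := hy2 j hj
        rw [hdot] at this
        rw [abs_mul, abs_of_pos (inv_pos.mpr hlam)]
        calc lam⁻¹ * |(Xᵀ *ᵥ (y - XA *ᵥ βA)) j| < lam⁻¹ * lam := by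
              exact mul_lt_mul_of_pos_left this (inv_pos.mpr hlam)
          _ = 1 := inv_mul_cancel₀ (ne_of_gt hlam)
      refine ⟨β, s, ⟨hk1, ?_⟩, ?_, hsmall⟩
      · intro j
        constructor
        · intro hbne
          by_cases h : j ∈ Aobs
          · rw [hsdef, hβdef]
            simp only [dif_pos h]
            exact hssign j h
          · exact absurd (hβ0 j h) hbne
        · intro hbz
          by_cases h : j ∈ Aobs
          · exact absurd (by rw [hβdef] at hbz; simpa [dif_pos h] using hbz)
              (hβAne ⟨j, h⟩)
          · exact le_of_lt (hsmall j h)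
      · intro j
        constructor
        · intro hbne
          by_contra h
          exact hbne (hβ0 j h)
        · intro h
          rw [hβdef]
          simp only [dif_pos h]
          exact hβAne ⟨j, h⟩
  · intro sA sA' hs hs' hne
    rw [Set.disjoint_left]
    intro y hy hy'
    simp only [Set.mem_setOf_eq] at hy hy'
    obtain ⟨h1, -⟩ := hy
    obtain ⟨h1', -⟩ := hy'
    set βA : {j // j ∈ Aobs} → ℝ := (XAᵀ * XA)⁻¹ *ᵥ (XAᵀ *ᵥ y - lam • sA) with hbd
    set βA' : {j // j ∈ Aobs} → ℝ := (XAᵀ * XA)⁻¹ *ᵥ (XAᵀ *ᵥ y - lam • sA') with hbd'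
    have e1 : (XAᵀ * XA) *ᵥ βA = XAᵀ *ᵥ y - lam • sA := hGinv _
    have e1' : (XAᵀ * XA) *ᵥ βA' = XAᵀ *ᵥ y - lam • sA' := hGinv _
    have hGdv : (XAᵀ * XA) *ᵥ (βA - βA') = lam • (sA' - sA) := by
      rw [Matrix.mulVec_sub, e1, e1', smul_sub]
      abel
    have key : (βA - βA') ⬝ᵥ (lam • (sA' - sA)) =
        (XA *ᵥ (βA - βA')) ⬝ᵥ (XA *ᵥ (βA - βA')) := by
      rw [← hGdv, ← Matrix.mulVec_mulVec, Matrix.dotProduct_mulVec,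
        Matrix.vecMul_transpose]
    have hpos : 0 ≤ (XA *ᵥ (βA - βA')) ⬝ᵥ (XA *ᵥ (βA - βA')) :=
      Finset.sum_nonneg fun i _ => mul_self_nonneg _
    have hterm : ∀ j : {j // j ∈ Aobs},
        (βA j - βA' j) * (lam * (sA' j - sA j)) ≤ 0 := by
      intro j
      have p1 : 0 < sA j * βA j := h1 j
      have p2 : 0 < sA' j * βA' j := h1' j
      rcases hs j with a | a <;> rcases hs' j with b | b <;> rw [a, b] <;>
        rw [a] at p1 <;> rw [b] at p2 <;> nlinarith
    obtain ⟨j0, hj0⟩ := Function.ne_iff.mp hne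
    have htermlt : (βA j0 - βA' j0) * (lam * (sA' j0 - sA j0)) < 0 := by
      have p1 : 0 < sA j0 * βA j0 := h1 j0
      have p2 : 0 < sA' j0 * βA' j0 := h1' j0
      rcases hs j0 with a | a <;> rcases hs' j0 with b | b <;>
        rw [a, b] at hj0 ⊢ <;> rw [a] at p1 <;> rw [b] at p2 <;>
        first
          | exact absurd rfl hj0
          | nlinarith
    have hneg : (βA - βA') ⬝ᵥ (lam • (sA' - sA)) < 0 := by
      have : (βA - βA') ⬝ᵥ (lam • (sA' - sA)) =
          ∑ j : {j // j ∈ Aobs}, (βA j - βA' j) * (lam * (sA' j - sA j)) := by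
        simp only [dotProduct, Pi.sub_apply, Pi.smul_apply, smul_eq_mul]
      rw [this]
      calc ∑ j : {j // j ∈ Aobs}, (βA j - βA' j) * (lam * (sA' j - sA j))
          < ∑ _j : {j // j ∈ Aobs}, (0 : ℝ) :=
            Finset.sum_lt_sum (fun j _ => hterm j) ⟨j0, Finset.mem_univ _, htermlt⟩
        _ = 0 := Finset.sum_const_zero
    linarith [key, hpos, hneg]
end
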